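/- arXiv:0909.4807 — 3 statements merged into one kernel-verified Lean document; each statement's English description precedes it below -/
import Mathlib

section
/- The sum of the n largest eigenvalues of a symmetric matrix A equals the maximum of tr(VᵀAV) over all N×n matrices V with orthonormal columns (Ky Fan variational characterization). -/
/-!
For orthogonal `U`, the substitution `V ↦ UV` permutes the matrices with orthonormal columns,
so the traces `tr (Vᵀ A V)` do not change when `A` is conjugated by `U`; by the spectral theorem
we may therefore take `A = diagonal d`. Then
`tr (Vᵀ A V) = ∑ i, d i * (V Vᵀ) i i`, and since `V Vᵀ` is an orthogonal projection of rank `n`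
the weights `(V Vᵀ) i i` lie in `[0, 1]` and sum to `n`. Such a weighted sum is at most the sum of
the `n` largest `d i`, with equality when `V` consists of the corresponding columns of the
identity.
-/

open Matrix
noncomputable def sumNLargest {N : ℕ} (n : ℕ) (A : Matrix (Fin N) (Fin N) ℝ) : ℝ :=
  if h : A.IsHermitian then
    (((List.ofFn h.eigenvalues).insertionSort (· ≥ ·)).take n).sum
  else 0

open Finset

theorem sum_mul_le_sum_of_compl_le {ι : Type*} [Fintype ι] {g s : ι → ℝ} {T : Finset ι}
    (htop : ∀ i ∈ T, ∀ j ∉ T, g j ≤ g i) (hs0 : ∀ i, 0 ≤ s i) (hs1 : ∀ i, s i ≤ 1)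
    (hsum : ∑ i, s i = #T) :
    ∑ i, g i * s i ≤ ∑ i ∈ T, g i := by
  classical
  obtain ⟨θ, hθT, hθTc⟩ : ∃ θ, (∀ i ∈ T, θ ≤ g i) ∧ ∀ j ∉ T, g j ≤ θ := by
    rcases T.eq_empty_or_nonempty with rfl | hT
    · obtain ⟨θ, hθ⟩ := Finite.bddAbove_range g
      exact ⟨θ, by simp, fun j _ => hθ ⟨j, rfl⟩⟩
    · exact ⟨T.inf' hT g, fun i hi => inf'_le g hi,
        fun j hj => le_inf' hT g fun i hi => htop i hi j hj⟩
  have hterm : ∀ i, g i * s i ≤ θ * s i + if i ∈ T then g i - θ else 0 := by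
    intro i
    split_ifs with hi
    · nlinarith [hθT i hi, hs1 i]
    · nlinarith [hθTc i hi, hs0 i]
  calc ∑ i, g i * s i ≤ ∑ i, (θ * s i + if i ∈ T then g i - θ else 0) :=
        sum_le_sum fun i _ => hterm i
    _ = ∑ i ∈ T, g i := by
        rw [sum_add_distrib, ← mul_sum, ← sum_filter, filter_mem_eq_inter, univ_inter,
          sum_sub_distrib, sum_const, nsmul_eq_mul, hsum]
        ring

theorem trace_transpose_mul_diagonal_mul {m n R : Type*} [Fintype m] [Fintype n]
    [CommSemiring R] [DecidableEq m] (W : Matrix m n R) (d : m → R) :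
    (Wᵀ * diagonal d * W).trace = ∑ i, d i * (W * Wᵀ) i i := by
  rw [Matrix.mul_assoc, trace_mul_comm, Matrix.mul_assoc]
  simp [trace, diagonal_mul]

theorem diag_mul_transpose_nonneg {m n : Type*} [Fintype n] (W : Matrix m n ℝ) (i : m) :
    0 ≤ (W * Wᵀ) i i := by
  simpa [mul_apply] using sum_nonneg fun j (_ : j ∈ univ) => mul_self_nonneg (W i j)

theorem diag_mul_transpose_le_one {m n : Type*} [Fintype m] [Fintype n] [DecidableEq m]
    [DecidableEq n] {W : Matrix m n ℝ} (hW : Wᵀ * W = 1) (i : m) : (W * Wᵀ) i i ≤ 1 := by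
  have hidem : W * Wᵀ * (W * Wᵀ) = W * Wᵀ := by
    rw [Matrix.mul_assoc, ← Matrix.mul_assoc Wᵀ, hW, Matrix.one_mul]
  have hcompl : 1 - W * Wᵀ = (1 - W * Wᵀ) * (1 - W * Wᵀ)ᵀ := by
    simp [Matrix.sub_mul, Matrix.mul_sub, hidem]
  have := diag_mul_transpose_nonneg (1 - W * Wᵀ) i
  rw [← hcompl] at this
  simpa using this

theorem sum_diag_mul_transpose_eq_card {m n : Type*} [Fintype m] [Fintype n] [DecidableEq n]
    {W : Matrix m n ℝ} (hW : Wᵀ * W = 1) : ∑ i, (W * Wᵀ) i i = Fintype.card n := by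
  change (W * Wᵀ).trace = _
  rw [trace_mul_comm, hW, trace_one]

section Compression

variable {m : Type*} [Fintype m] [DecidableEq m]

def compressionTraces (A : Matrix m m ℝ) (n : Type*) [Fintype n] [DecidableEq n] : Set ℝ :=
  {x | ∃ V : Matrix m n ℝ, Vᵀ * V = 1 ∧ x = (Vᵀ * A * V).trace}

variable {n : Type*} [Fintype n] [DecidableEq n]

theorem compressionTraces_mul_mul_transpose {U : Matrix m m ℝ} (hU : Uᵀ * U = 1)
    (A : Matrix m m ℝ) : compressionTraces (U * A * Uᵀ) n = compressionTraces A n := by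
  have hU' : U * Uᵀ = 1 := mul_eq_one_comm.mp hU
  ext x
  constructor
  · rintro ⟨V, hV, rfl⟩
    refine ⟨Uᵀ * V, ?_, ?_⟩
    · rw [transpose_mul, transpose_transpose, Matrix.mul_assoc, ← Matrix.mul_assoc U, hU',
        Matrix.one_mul, hV]
    · simp only [transpose_mul, transpose_transpose, Matrix.mul_assoc]
  · rintro ⟨V, hV, rfl⟩
    refine ⟨U * V, ?_, ?_⟩
    · rw [transpose_mul, Matrix.mul_assoc, ← Matrix.mul_assoc Uᵀ, hU, Matrix.one_mul, hV]
    · simp only [transpose_mul, Matrix.mul_assoc, ← Matrix.mul_assoc Uᵀ U, hU, Matrix.one_mul]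

theorem sum_mem_compressionTraces_diagonal (d : m → ℝ) (f : n ↪ m) :
    ∑ j, d (f j) ∈ compressionTraces (diagonal d) n := by
  refine ⟨(1 : Matrix m m ℝ).submatrix (Equiv.refl m) f, ?_, ?_⟩
  · rw [transpose_submatrix, transpose_one, submatrix_mul_equiv, Matrix.one_mul,
      submatrix_one _ f.injective]
  · have hd : diagonal d = (diagonal d).submatrix (Equiv.refl m) (Equiv.refl m) := rfl
    rw [transpose_submatrix, transpose_one, hd, submatrix_mul_equiv, submatrix_mul_equiv,
      Matrix.one_mul, Matrix.mul_one, submatrix_diagonal_embedding, trace_diagonal]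
    rfl

theorem isGreatest_compressionTraces_diagonal {d : m → ℝ} {T : Finset m}
    (hcard : #T = Fintype.card n) (htop : ∀ i ∈ T, ∀ j ∉ T, d j ≤ d i) :
    IsGreatest (compressionTraces (diagonal d) n) (∑ i ∈ T, d i) := by
  constructor
  · let e : n ≃ T := Fintype.equivOfCardEq (by rw [Fintype.card_coe, hcard])
    have hsum : ∑ j, d (e j) = ∑ i ∈ T, d i := by
      rw [e.sum_comp (fun i : T => d i), sum_coe_sort]
    rw [← hsum]
    exact sum_mem_compressionTraces_diagonal d (e.toEmbedding.trans (.subtype _))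
  · rintro x ⟨V, hV, rfl⟩
    rw [trace_transpose_mul_diagonal_mul]
    exact sum_mul_le_sum_of_compl_le htop (diag_mul_transpose_nonneg V)
      (diag_mul_transpose_le_one hV) (by rw [sum_diag_mul_transpose_eq_card hV, hcard])

theorem Matrix.IsHermitian.compressionTraces_eq_diagonal {A : Matrix m m ℝ}
    (hA : A.IsHermitian) :
    compressionTraces A n = compressionTraces (diagonal hA.eigenvalues) n := by
  set U : Matrix m m ℝ := (hA.eigenvectorUnitary : Matrix m m ℝ)
  have hstar : star U = Uᵀ := by
    rw [star_eq_conjTranspose, conjTranspose_eq_transpose_of_trivial]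
  have hU : Uᵀ * U = 1 := hstar ▸ Unitary.coe_star_mul_self hA.eigenvectorUnitary
  conv_lhs => rw [hA.spectral_theorem, Unitary.conjStarAlgAut_apply]
  rw [hstar, RCLike.ofReal_real_eq_id, Function.id_comp]
  exact compressionTraces_mul_mul_transpose hU _

end Compression

theorem List.insertionSort_ge_ofFn {α : Type*} [LinearOrder α] {N : ℕ} (f : Fin N → α)
    (σ : Equiv.Perm (Fin N)) (hσ : Antitone (f ∘ σ)) :
    (List.ofFn f).insertionSort (· ≥ ·) = List.ofFn (f ∘ σ) :=
  List.Perm.eq_of_pairwise' (List.pairwise_insertionSort _ _)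
    (List.pairwise_ofFn.mpr fun _ _ hij => hσ hij.le)
    ((List.perm_insertionSort _ _).trans (σ.ofFn_comp_perm f).symm)

theorem exists_perm_antitone_comp {α : Type*} [LinearOrder α] {N : ℕ} (f : Fin N → α) :
    ∃ σ : Equiv.Perm (Fin N), Antitone (f ∘ σ) :=
  ⟨Fin.revPerm.trans (Tuple.sort f), fun _ _ hij => Tuple.monotone_sort f (Fin.rev_le_rev.mpr hij)⟩

theorem sumNLargest_eq_sum_filter {N : ℕ} (n : ℕ) {A : Matrix (Fin N) (Fin N) ℝ}
    (hA : A.IsHermitian) {σ : Equiv.Perm (Fin N)} (hσ : Antitone (hA.eigenvalues ∘ σ)) :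
    sumNLargest n A = ∑ j with j.val < n, hA.eigenvalues (σ j) := by
  rw [sumNLargest, dif_pos hA, List.insertionSort_ge_ofFn _ σ hσ, List.sum_take_ofFn]
  rfl

theorem ky_fan_variational_general (N n : ℕ) (hnN : n ≤ N)
    (A : Matrix (Fin N) (Fin N) ℝ) (hA : A.IsHermitian) :
    IsGreatest {x : ℝ | ∃ V : Matrix (Fin N) (Fin n) ℝ,
        Vᵀ * V = 1 ∧ x = (Vᵀ * A * V).trace} (sumNLargest n A) := by
  obtain ⟨σ, hσ⟩ := exists_perm_antitone_comp hA.eigenvalues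
  set T : Finset (Fin N) := (univ.filter fun j : Fin N => j.val < n).map σ.toEmbedding
  have hcard : #T = Fintype.card (Fin n) := by
    rw [card_map, Fin.card_filter_val_lt, min_eq_right hnN, Fintype.card_fin]
  have htop : ∀ i ∈ T, ∀ j ∉ T, hA.eigenvalues j ≤ hA.eigenvalues i := by
    intro i hi j hj
    simp only [T, mem_map_equiv, mem_filter, mem_univ, true_and, not_lt] at hi hj
    simpa using hσ (hi.le.trans hj)
  have hsum : ∑ i ∈ T, hA.eigenvalues i = ∑ j with j.val < n, hA.eigenvalues (σ j) :=
    sum_map _ _ _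
  change IsGreatest (compressionTraces A (Fin n)) _
  rw [sumNLargest_eq_sum_filter n hA hσ, ← hsum, hA.compressionTraces_eq_diagonal]
  exact isGreatest_compressionTraces_diagonal hcard htop

/-- Ky Fan: the sum of the `n` largest eigenvalues of a symmetric matrix `A` is the
maximum of `tr (Vᵀ A V)` over `N × n` matrices `V` with orthonormal columns. -/
theorem ky_fan_variational (N n : ℕ) (hn1 : 1 ≤ n) (hnN : n ≤ N)
    (A : Matrix (Fin N) (Fin N) ℝ) (hA : A.IsHermitian) :
    IsGreatest {x : ℝ | ∃ V : Matrix (Fin N) (Fin n) ℝ,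
        Vᵀ * V = 1 ∧ x = (Vᵀ * A * V).trace} (sumNLargest n A) :=
  ky_fan_variational_general N n hnN A hA
end

section
/- With e(k+1) = (𝒲(k) − J)e(k), 𝒲(k) i.i.d. symmetric with 𝒲(k)𝟙 = 𝟙 a.s., e(0) ⟂ 𝟙 deterministic, one has E[‖e(k)‖²] ≤ λ_1(E[𝒲²] − J)^k ‖e(0)‖² for all k. -/
/-!
For a symmetric `W` with `W 𝟙 = 𝟙` one has `(W - J)ᵀ (W - J) = W² - J`, so
`‖e(k+1)‖² = e(k)ᵀ (𝒲(k)² - J) e(k)`. Since `e(k)` is a function of `𝒲(0), …, 𝒲(k-1)`, it is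
independent of `𝒲(k)`, and taking expectations replaces `𝒲(k)²` by `E[𝒲²]`; the Rayleigh
bound then gives `E‖e(k+1)‖² ≤ λ₁ E‖e(k)‖²`. The same identity exhibits `E[𝒲²] - J` as the
mean of `(𝒲 - J)ᵀ (𝒲 - J)`, a positive semidefinite matrix, so `λ₁ ≥ 0` and the one-step
bounds can be iterated.
-/

open Matrix MeasureTheory ProbabilityTheory

instance {m n : Type*} : MeasurableSpace (Matrix m n ℝ) :=
  inferInstanceAs (MeasurableSpace (m → n → ℝ))

instance {m n : Type*} [Fintype m] [Fintype n] : BorelSpace (Matrix m n ℝ) :=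
  inferInstanceAs (BorelSpace (m → n → ℝ))

namespace Matrix

variable {n : Type*} [Fintype n]

noncomputable def averagingMatrix (n : Type*) [Fintype n] : Matrix n n ℝ :=
  of fun _ _ => 1 / Fintype.card n

lemma dotProduct_mulVec_eq_sum (B : Matrix n n ℝ) (x : n → ℝ) :
    x ⬝ᵥ (B *ᵥ x) = ∑ i, ∑ j, B i j * (x i * x j) := by
  simp only [dotProduct, mulVec, Finset.mul_sum]
  exact Finset.sum_congr rfl fun i _ => Finset.sum_congr rfl fun j _ => by ring

lemma mulVec_dotProduct_mulVec {m : Type*} [Fintype m] (A : Matrix m n ℝ) (x : n → ℝ) :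
    (A *ᵥ x) ⬝ᵥ (A *ᵥ x) = x ⬝ᵥ ((Aᵀ * A) *ᵥ x) := by
  rw [← mulVec_mulVec, dotProduct_mulVec x Aᵀ, vecMul_transpose]

open scoped MatrixOrder in
lemma dotProduct_mulVec_le_iSup_eigenvalues [DecidableEq n] {A : Matrix n n ℝ}
    (hA : A.IsHermitian) (x : n → ℝ) :
    x ⬝ᵥ (A *ᵥ x) ≤ (⨆ i, hA.eigenvalues i) * (x ⬝ᵥ x) := by
  have hle : A ≤ algebraMap ℝ (Matrix n n ℝ) (⨆ i, hA.eigenvalues i) := by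
    refine le_algebraMap_of_spectrum_le fun r hr => ?_
    obtain ⟨i, rfl⟩ := hA.spectrum_real_eq_range_eigenvalues ▸ hr
    exact le_ciSup (Set.finite_range _).bddAbove i
  have := (le_iff.mp hle).dotProduct_mulVec_nonneg x
  simp only [star_trivial, sub_mulVec, dotProduct_sub, Algebra.algebraMap_eq_smul_one,
    smul_mulVec, one_mulVec, dotProduct_smul, smul_eq_mul] at this
  linarith

lemma IsHermitian.iSup_eigenvalues_nonneg [DecidableEq n] {A : Matrix n n ℝ} (hA : A.IsHermitian)
    (h : ∀ x, 0 ≤ x ⬝ᵥ (A *ᵥ x)) : 0 ≤ ⨆ i, hA.eigenvalues i :=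
  Real.iSup_nonneg (PosSemidef.of_dotProduct_mulVec_nonneg hA h).eigenvalues_nonneg

lemma averagingMatrix_mul_self : averagingMatrix n * averagingMatrix n = averagingMatrix n := by
  ext i j
  have hcard : (Fintype.card n : ℝ) ≠ 0 := Nat.cast_ne_zero.mpr (Fintype.card_pos_iff.mpr ⟨i⟩).ne'
  simp [averagingMatrix, mul_apply]
  field_simp

lemma mul_averagingMatrix_of_mulVec_one {M : Matrix n n ℝ}
    (hM : M *ᵥ (fun _ => 1) = fun _ => 1) : M * averagingMatrix n = averagingMatrix n := by
  ext i j
  have hrow := congrFun hM i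
  simp only [mulVec, dotProduct, mul_one] at hrow
  simp [averagingMatrix, mul_apply, ← Finset.sum_mul, hrow]

lemma transpose_sub_averagingMatrix_mul_self {M : Matrix n n ℝ} (hs : M.IsSymm)
    (hM : M *ᵥ (fun _ => 1) = fun _ => 1) :
    (M - averagingMatrix n)ᵀ * (M - averagingMatrix n) = M * M - averagingMatrix n := by
  have hJt : (averagingMatrix n)ᵀ = averagingMatrix n := by ext; simp [averagingMatrix]
  have hMJ := mul_averagingMatrix_of_mulVec_one hM
  have hJM : averagingMatrix n * M = averagingMatrix n := by
    rw [← transpose_transpose (averagingMatrix n * M), transpose_mul, hs.eq, hJt, hMJ, hJt]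
  rw [transpose_sub, hs.eq, hJt, sub_mul, mul_sub, mul_sub, hMJ, hJM, averagingMatrix_mul_self]
  abel

end Matrix

section Expectation

variable {n Ω : Type*} [MeasurableSpace Ω] {μ : Measure Ω}

noncomputable def meanMatrix (μ : Measure Ω) (A : Ω → Matrix n n ℝ) : Matrix n n ℝ :=
  of fun i j => ∫ ω, A ω i j ∂μ

lemma meanMatrix_sub_const [IsProbabilityMeasure μ] {A : Ω → Matrix n n ℝ}
    (hA : ∀ i j, Integrable (fun ω => A ω i j) μ) (C : Matrix n n ℝ) :
    meanMatrix μ (fun ω => A ω - C) = meanMatrix μ A - C := by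
  ext i j
  simp [meanMatrix, integral_sub (hA i j) (integrable_const (C i j))]

lemma ProbabilityTheory.IdentDistrib.meanMatrix_eq {ν : Measure Ω} {A B : Ω → Matrix n n ℝ}
    (h : IdentDistrib A B μ ν) : meanMatrix μ A = meanMatrix ν B := by
  ext i j
  exact (h.comp (u := fun M : Matrix n n ℝ => M i j) (by fun_prop)).integral_eq

variable {A : Ω → Matrix n n ℝ} {x : Ω → n → ℝ}

lemma ProbabilityTheory.IndepFun.entry_indepFun_coord_mul (hind : IndepFun A x μ) (i j k l : n) :
    IndepFun (fun ω => A ω i j) (fun ω => x ω k * x ω l) μ :=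
  hind.comp (φ := fun M : Matrix n n ℝ => M i j) (ψ := fun v : n → ℝ => v k * v l)
    (by fun_prop) (by fun_prop)

variable [Fintype n]

lemma integrable_mul_apply_of_integrable_dotProduct_self {x : Ω → n → ℝ} (hx : Measurable x)
    (hint : Integrable (fun ω => x ω ⬝ᵥ x ω) μ) (i j : n) :
    Integrable (fun ω => x ω i * x ω j) μ := by
  refine hint.mono' (by fun_prop) (Filter.Eventually.of_forall fun ω => ?_)
  have hsq : ∀ l, x ω l ^ 2 ≤ x ω ⬝ᵥ x ω := fun l => by
    simpa [dotProduct, sq] using Finset.single_le_sum (f := fun l => x ω l ^ 2)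
      (fun l _ => sq_nonneg _) (Finset.mem_univ l)
  rw [Real.norm_eq_abs, abs_mul]
  nlinarith [hsq i, hsq j, sq_abs (x ω i), sq_abs (x ω j), sq_nonneg (|x ω i| - |x ω j|)]

lemma integrable_dotProduct_mulVec_of_indepFun (hx : Measurable x) (hind : IndepFun A x μ)
    (hA : ∀ i j, Integrable (fun ω => A ω i j) μ)
    (hint : Integrable (fun ω => x ω ⬝ᵥ x ω) μ) :
    Integrable (fun ω => x ω ⬝ᵥ (A ω *ᵥ x ω)) μ := by
  simp only [dotProduct_mulVec_eq_sum]
  exact integrable_finsetSum _ fun i _ => integrable_finsetSum _ fun j _ =>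
    (hind.entry_indepFun_coord_mul i j i j).integrable_mul (hA i j)
      (integrable_mul_apply_of_integrable_dotProduct_self hx hint i j)

lemma integral_dotProduct_mulVec_of_indepFun (hx : Measurable x) (hind : IndepFun A x μ)
    (hA : ∀ i j, Integrable (fun ω => A ω i j) μ)
    (hint : Integrable (fun ω => x ω ⬝ᵥ x ω) μ) :
    ∫ ω, x ω ⬝ᵥ (A ω *ᵥ x ω) ∂μ = ∫ ω, x ω ⬝ᵥ (meanMatrix μ A *ᵥ x ω) ∂μ := by
  have hx2 := integrable_mul_apply_of_integrable_dotProduct_self hx hint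
  have hAx : ∀ i j, Integrable (fun ω => A ω i j * (x ω i * x ω j)) μ := fun i j =>
    (hind.entry_indepFun_coord_mul i j i j).integrable_mul (hA i j) (hx2 i j)
  simp only [dotProduct_mulVec_eq_sum]
  rw [integral_finsetSum _ fun i _ => integrable_finsetSum _ fun j _ => hAx i j,
    integral_finsetSum _ fun i _ => integrable_finsetSum _ fun j _ =>
      (hx2 i j).const_mul (meanMatrix μ A i j)]
  refine Finset.sum_congr rfl fun i _ => ?_
  rw [integral_finsetSum _ fun j _ => hAx i j,
    integral_finsetSum _ fun j _ => (hx2 i j).const_mul (meanMatrix μ A i j)]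
  refine Finset.sum_congr rfl fun j _ => ?_
  rw [integral_const_mul]
  exact (hind.entry_indepFun_coord_mul i j i j).integral_fun_mul_eq_mul_integral
    (hA i j).aestronglyMeasurable (hx2 i j).aestronglyMeasurable

lemma integral_dotProduct_mulVec_le_iSup_eigenvalues [IsProbabilityMeasure μ] [DecidableEq n]
    {B : Matrix n n ℝ} (hB : B.IsHermitian) (hx : Measurable x)
    (hint : Integrable (fun ω => x ω ⬝ᵥ x ω) μ) :
    ∫ ω, x ω ⬝ᵥ (B *ᵥ x ω) ∂μ ≤ (⨆ i, hB.eigenvalues i) * ∫ ω, x ω ⬝ᵥ x ω ∂μ := by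
  rw [← integral_const_mul]
  exact integral_mono (integrable_dotProduct_mulVec_of_indepFun (A := fun _ => B) hx
      (indepFun_const_left _ _) (fun _ _ => integrable_const _) hint)
    (hint.const_mul _) fun ω => dotProduct_mulVec_le_iSup_eigenvalues hB _

end Expectation

section Recursion

variable {n Ω : Type*} [Fintype n] {W : ℕ → Ω → Matrix n n ℝ} {e : ℕ → Ω → n → ℝ} {e0 : n → ℝ}

section

variable {J : Matrix n n ℝ} (he0 : ∀ ω, e 0 ω = e0)
  (he : ∀ k ω, e (k + 1) ω = (W k ω - J) *ᵥ e k ω)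
include he0 he

lemma measurable_past_of_recursion (k : ℕ) :
    Measurable[⨆ j ∈ Set.Iio k, MeasurableSpace.comap (W j) inferInstance] (e k) := by
  induction k with
  | zero =>
    rw [show e 0 = fun _ => e0 from funext he0]
    exact measurable_const
  | succ k ih =>
    have hpast : (⨆ j ∈ Set.Iio k, MeasurableSpace.comap (W j) inferInstance) ≤
        ⨆ j ∈ Set.Iio (k + 1), MeasurableSpace.comap (W j) inferInstance :=
      biSup_mono fun j hj => hj.trans k.lt_succ_self
    have hWk : Measurable[⨆ j ∈ Set.Iio (k + 1), MeasurableSpace.comap (W j) inferInstance]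
        (W k) :=
      Measurable.of_comap_le (le_biSup (fun j => MeasurableSpace.comap (W j) inferInstance)
        k.lt_succ_self)
    rw [show e (k + 1) = fun ω => (W k ω - J) *ᵥ e k ω from funext (he k)]
    exact ((continuous_fst.sub continuous_const).matrix_mulVec continuous_snd).measurable.comp
      (hWk.prodMk (ih.mono hpast le_rfl))

variable [MeasurableSpace Ω]

lemma measurable_of_recursion (hW : ∀ k, Measurable (W k)) (k : ℕ) : Measurable (e k) :=
  (measurable_past_of_recursion he0 he k).mono (iSup₂_le fun j _ => (hW j).comap_le) le_rfl

lemma indepFun_of_recursion {μ : Measure Ω} (hW : ∀ k, Measurable (W k))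
    (hind : iIndepFun W μ) (k : ℕ) :
    IndepFun (W k) (e k) μ := by
  rw [IndepFun_iff_Indep]
  have h := indep_iSup_of_disjoint (fun j => (hW j).comap_le)
    ((iIndepFun_iff_iIndep _ _ _).mp hind) (S := {k}) (T := Set.Iio k) (by simp)
  refine indep_of_indep_of_le_right (indep_of_indep_of_le_left h ?_)
    (measurable_past_of_recursion he0 he k).comap_le
  exact le_biSup (fun j => MeasurableSpace.comap (W j) inferInstance) (Set.mem_singleton k)

end

lemma integrable_and_integral_dotProduct_self_succ [MeasurableSpace Ω] {μ : Measure Ω} [IsFiniteMeasure μ]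
    (he0 : ∀ ω, e 0 ω = e0)
    (he : ∀ k ω, e (k + 1) ω = (W k ω - averagingMatrix n) *ᵥ e k ω)
    (hW : ∀ k, Measurable (W k)) (hind : iIndepFun W μ) (k : ℕ)
    (hsymm : ∀ᵐ ω ∂μ, (W k ω).IsSymm)
    (hrow : ∀ᵐ ω ∂μ, W k ω *ᵥ (fun _ => (1 : ℝ)) = fun _ => 1)
    (hW2 : ∀ i j, Integrable (fun ω => (W k ω * W k ω) i j) μ)
    (hint : Integrable (fun ω => e k ω ⬝ᵥ e k ω) μ) :
    Integrable (fun ω => e (k + 1) ω ⬝ᵥ e (k + 1) ω) μ ∧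
      ∫ ω, e (k + 1) ω ⬝ᵥ e (k + 1) ω ∂μ =
        ∫ ω, e k ω ⬝ᵥ (meanMatrix μ (fun ω => W k ω * W k ω - averagingMatrix n) *ᵥ e k ω) ∂μ := by
  have hae : (fun ω => e (k + 1) ω ⬝ᵥ e (k + 1) ω) =ᵐ[μ]
      fun ω => e k ω ⬝ᵥ ((W k ω * W k ω - averagingMatrix n) *ᵥ e k ω) := by
    filter_upwards [hsymm, hrow] with ω hs hr
    rw [he, mulVec_dotProduct_mulVec, transpose_sub_averagingMatrix_mul_self hs hr]
  have hx := measurable_of_recursion he0 he hW k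
  have hAind : IndepFun (fun ω => W k ω * W k ω - averagingMatrix n) (e k) μ :=
    (indepFun_of_recursion he0 he hW hind k).comp
      (((continuous_id.matrix_mul continuous_id).sub continuous_const).measurable) measurable_id
  have hA i j : Integrable (fun ω => (W k ω * W k ω - averagingMatrix n) i j) μ :=
    (hW2 i j).sub (integrable_const _)
  exact ⟨(integrable_dotProduct_mulVec_of_indepFun hx hAind hA hint).congr hae.symm,
    (integral_congr_ae hae).trans (integral_dotProduct_mulVec_of_indepFun hx hAind hA hint)⟩

end Recursion

lemma dotProduct_meanMatrix_mulVec_nonneg {n Ω : Type*} [Fintype n] [MeasurableSpace Ω]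
    {μ : Measure Ω} [IsProbabilityMeasure μ] {M : Ω → Matrix n n ℝ}
    (hsymm : ∀ᵐ ω ∂μ, (M ω).IsSymm) (hrow : ∀ᵐ ω ∂μ, M ω *ᵥ (fun _ => (1 : ℝ)) = fun _ => 1)
    (hM2 : ∀ i j, Integrable (fun ω => (M ω * M ω) i j) μ) (x : n → ℝ) :
    0 ≤ x ⬝ᵥ (meanMatrix μ (fun ω => M ω * M ω - averagingMatrix n) *ᵥ x) := by
  have h := integral_dotProduct_mulVec_of_indepFun
    (A := fun ω => M ω * M ω - averagingMatrix n) (x := fun _ => x) measurable_const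
    (indepFun_const_right _ x) (fun i j => (hM2 i j).sub (integrable_const _))
    (integrable_const _)
  simp only [integral_const, probReal_univ, one_smul] at h
  rw [← h]
  refine integral_nonneg_of_ae ?_
  filter_upwards [hsymm, hrow] with ω hs hr
  rw [← transpose_sub_averagingMatrix_mul_self hs hr, ← mulVec_dotProduct_mulVec]
  exact Finset.sum_nonneg fun i _ => mul_self_nonneg _

theorem mse_decay_bound_general (N : ℕ) {Ω : Type*} [MeasurableSpace Ω]
    (μ : MeasureTheory.Measure Ω) [IsProbabilityMeasure μ]
    (Wseq : ℕ → Ω → Matrix (Fin N) (Fin N) ℝ) (hWmeas : ∀ k, Measurable (Wseq k))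
    (hindep : iIndepFun Wseq μ)
    (hident : ∀ k, IdentDistrib (Wseq k) (Wseq 0) μ μ)
    (hWsymm : ∀ k, ∀ᵐ ω ∂μ, (Wseq k ω).IsSymm)
    (hWrow : ∀ k, ∀ᵐ ω ∂μ, Wseq k ω *ᵥ (fun _ => (1 : ℝ)) = fun _ => 1)
    (hintW : ∀ i j, Integrable (fun ω => (Wseq 0 ω * Wseq 0 ω) i j) μ)
    (J : Matrix (Fin N) (Fin N) ℝ) (hJ : J = Matrix.of fun _ _ => (1 : ℝ) / N)
    (e0 : Fin N → ℝ)
    (e : ℕ → Ω → Fin N → ℝ) (he0 : ∀ ω, e 0 ω = e0)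
    (he : ∀ k ω, e (k + 1) ω = (Wseq k ω - J) *ᵥ e k ω)
    (EW2 : Matrix (Fin N) (Fin N) ℝ)
    (hE : EW2 = Matrix.of fun i j => ∫ ω, (Wseq 0 ω * Wseq 0 ω) i j ∂μ)
    (hH : (EW2 - J).IsHermitian)
    (lam1 : ℝ) (hlam1 : lam1 = ⨆ i, hH.eigenvalues i) :
    ∀ k, ∫ ω, ∑ i, (e k ω i) ^ 2 ∂μ ≤ lam1 ^ k * ∑ i, (e0 i) ^ 2 := by
  obtain rfl : J = averagingMatrix (Fin N) := by simp [hJ, averagingMatrix]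
  have hW2 k : IdentDistrib (fun ω => Wseq k ω * Wseq k ω) (fun ω => Wseq 0 ω * Wseq 0 ω) μ μ :=
    (hident k).comp (continuous_id.matrix_mul continuous_id).measurable
  have hW2int k i j : Integrable (fun ω => (Wseq k ω * Wseq k ω) i j) μ :=
    ((hW2 k).comp (u := fun M : Matrix (Fin N) (Fin N) ℝ => M i j) (by fun_prop)).integrable_iff.mpr
      (hintW i j)
  have hmean k : meanMatrix μ (fun ω => Wseq k ω * Wseq k ω - averagingMatrix (Fin N)) =
      EW2 - averagingMatrix (Fin N) := by
    rw [meanMatrix_sub_const (hW2int k), (hW2 k).meanMatrix_eq, hE]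
    rfl
  have hlam : 0 ≤ lam1 := hlam1 ▸ hH.iSup_eigenvalues_nonneg fun x =>
    hmean 0 ▸ dotProduct_meanMatrix_mulVec_nonneg (hWsymm 0) (hWrow 0) hintW x
  have hbound k : Integrable (fun ω => e k ω ⬝ᵥ e k ω) μ ∧
      ∫ ω, e k ω ⬝ᵥ e k ω ∂μ ≤ lam1 ^ k * (e0 ⬝ᵥ e0) := by
    induction k with
    | zero => simp [he0]
    | succ k ih =>
      obtain ⟨hint, hle⟩ := ih
      obtain ⟨hint', heq⟩ := integrable_and_integral_dotProduct_self_succ he0 he hWmeas hindep k (hWsymm k)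
        (hWrow k) (hW2int k) hint
      refine ⟨hint', ?_⟩
      calc ∫ ω, e (k + 1) ω ⬝ᵥ e (k + 1) ω ∂μ
          = ∫ ω, e k ω ⬝ᵥ ((EW2 - averagingMatrix (Fin N)) *ᵥ e k ω) ∂μ := by rw [heq, hmean]
        _ ≤ lam1 * ∫ ω, e k ω ⬝ᵥ e k ω ∂μ := hlam1 ▸
          integral_dotProduct_mulVec_le_iSup_eigenvalues hH
            (measurable_of_recursion he0 he hWmeas k) hint
        _ ≤ lam1 * (lam1 ^ k * (e0 ⬝ᵥ e0)) := mul_le_mul_of_nonneg_left hle hlam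
        _ = lam1 ^ (k + 1) * (e0 ⬝ᵥ e0) := by ring
  intro k
  simpa only [dotProduct, sq] using (hbound k).2

/-- With `e(k+1) = (𝒲(k) - J) e(k)`, `𝒲(k)` i.i.d. symmetric with `𝒲(k) 𝟙 = 𝟙` a.s.
and `e(0) ⟂ 𝟙` deterministic, one has `E[‖e(k)‖²] ≤ λ_1(E[𝒲²] - J)^k ‖e(0)‖²`. -/
theorem mse_decay_bound (N : ℕ) {Ω : Type*} [MeasurableSpace Ω]
    (μ : MeasureTheory.Measure Ω) [IsProbabilityMeasure μ]
    (Wseq : ℕ → Ω → Matrix (Fin N) (Fin N) ℝ) (hWmeas : ∀ k, Measurable (Wseq k))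
    (hindep : iIndepFun Wseq μ)
    (hident : ∀ k, IdentDistrib (Wseq k) (Wseq 0) μ μ)
    (hWsymm : ∀ k, ∀ᵐ ω ∂μ, (Wseq k ω).IsSymm)
    (hWrow : ∀ k, ∀ᵐ ω ∂μ, Wseq k ω *ᵥ (fun _ => (1 : ℝ)) = fun _ => 1)
    (hintW : ∀ i j, Integrable (fun ω => (Wseq 0 ω * Wseq 0 ω) i j) μ)
    (J : Matrix (Fin N) (Fin N) ℝ) (hJ : J = Matrix.of fun _ _ => (1 : ℝ) / N)
    (e0 : Fin N → ℝ) (hperp : (fun _ => (1 : ℝ)) ⬝ᵥ e0 = 0)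
    (e : ℕ → Ω → Fin N → ℝ) (he0 : ∀ ω, e 0 ω = e0)
    (he : ∀ k ω, e (k + 1) ω = (Wseq k ω - J) *ᵥ e k ω)
    (hinte : ∀ k, Integrable (fun ω => ∑ i, (e k ω i) ^ 2) μ)
    (EW2 : Matrix (Fin N) (Fin N) ℝ)
    (hE : EW2 = Matrix.of fun i j => ∫ ω, (Wseq 0 ω * Wseq 0 ω) i j ∂μ)
    (hH : (EW2 - J).IsHermitian)
    (lam1 : ℝ) (hlam1 : lam1 = ⨆ i, hH.eigenvalues i) :
    ∀ k, ∫ ω, ∑ i, (e k ω i) ^ 2 ∂μ ≤ lam1 ^ k * ∑ i, (e0 i) ^ 2 :=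
  mse_decay_bound_general N μ Wseq hWmeas hindep hident hWsymm hWrow hintW J hJ e0 e he0 he EW2 hE
    hH lam1 hlam1
end

section
/- The function mapping the weight vector {W_ij : {i,j} ∈ E} to λ_1(E[𝒲²] − J) is convex, where the state matrix 𝒲 is defined by 𝒲_ij = W_ij·𝟏{link ij alive}, 𝒲_ii = 1 − Σ_j 𝒲_ij, and the link indicators have an arbitrary fixed joint distribution. -/
open Matrix MeasureTheory

/-- The random consensus state matrix: for weights `Wt : ι → ℝ` on the edges of the
supergraph (edge `η` joins nodes `a η` and `b η`), and random link indicators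
`L η ω ∈ {0,1}`, `𝒲_ij = Σ_{edges η = {i,j}} Wt η · L η ω` for `i ≠ j`, with
diagonal entries making all row sums equal to `1`. -/
noncomputable def stateMatrix {N : ℕ} {ι : Type*} [Fintype ι] {Ω : Type*}
    (a b : ι → Fin N) (L : ι → Ω → ℝ) (Wt : ι → ℝ) (ω : Ω) :
    Matrix (Fin N) (Fin N) ℝ :=
  Matrix.of fun i j =>
    if i = j then 1 - ∑ η, (if a η = i ∨ b η = i then Wt η * L η ω else 0)
    else ∑ η, (if (a η = i ∧ b η = j) ∨ (a η = j ∧ b η = i) then Wt η * L η ω else 0)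

/-! The largest eigenvalue of a symmetric matrix `A` is the maximum of `x ⬝ᵥ A *ᵥ x` over unit
vectors `x`, and the maximum is attained at an eigenvector. For a fixed `x`, the quadratic form of
`E[𝒲(W)²] - J` is `E[‖𝒲(W) x‖²] - xᵀ J x`; since `𝒲(W)` is affine in `W` for every `ω` and `‖·‖²`
is convex, this is a convex function of `W`. A pointwise maximum of convex functions that is
attained is convex. -/

theorem EuclideanSpace.real_inner_toLp_toLp {n : Type*} [Fintype n] (u v : n → ℝ) :
    inner ℝ (WithLp.toLp 2 u) (WithLp.toLp 2 v) = u ⬝ᵥ v := by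
  rw [EuclideanSpace.inner_toLp_toLp, star_trivial, dotProduct_comm]

theorem OrthonormalBasis.sum_dotProduct_mul_dotProduct {n : Type*} [Fintype n]
    (b : OrthonormalBasis n ℝ (EuclideanSpace ℝ n)) (u v : n → ℝ) :
    ∑ i, (⇑(b i) ⬝ᵥ u) * (⇑(b i) ⬝ᵥ v) = u ⬝ᵥ v := by
  simpa only [← EuclideanSpace.real_inner_toLp_toLp, real_inner_comm _ (b _)] using
    b.sum_inner_mul_inner (WithLp.toLp 2 u) (WithLp.toLp 2 v)

theorem OrthonormalBasis.dotProduct_self {n : Type*} [Fintype n]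
    (b : OrthonormalBasis n ℝ (EuclideanSpace ℝ n)) (i : n) : ⇑(b i) ⬝ᵥ ⇑(b i) = 1 := by
  simpa only [← EuclideanSpace.real_inner_toLp_toLp] using b.inner_eq_one i

namespace Matrix.IsHermitian

variable {n : Type*} [Fintype n] [DecidableEq n] {A : Matrix n n ℝ} (hA : A.IsHermitian)
include hA

theorem dotProduct_mulVec_self_eq_sum_eigenvalues_mul_sq (x : n → ℝ) :
    x ⬝ᵥ A *ᵥ x = ∑ i, hA.eigenvalues i * (⇑(hA.eigenvectorBasis i) ⬝ᵥ x) ^ 2 := by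
  rw [← hA.eigenvectorBasis.sum_dotProduct_mul_dotProduct]
  refine Finset.sum_congr rfl fun i _ => ?_
  have hT : Aᵀ = A := hA
  rw [dotProduct_mulVec, ← mulVec_transpose, hT, hA.mulVec_eigenvectorBasis, smul_dotProduct,
    smul_eq_mul]
  ring

theorem dotProduct_mulVec_le_sup'_eigenvalues_mul [Nonempty n] (x : n → ℝ) :
    x ⬝ᵥ A *ᵥ x ≤ Finset.univ.sup' Finset.univ_nonempty hA.eigenvalues * (x ⬝ᵥ x) := by
  rw [hA.dotProduct_mulVec_self_eq_sum_eigenvalues_mul_sq,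
    ← hA.eigenvectorBasis.sum_dotProduct_mul_dotProduct, Finset.mul_sum]
  refine Finset.sum_le_sum fun i _ => ?_
  rw [← sq]
  exact mul_le_mul_of_nonneg_right (Finset.le_sup' _ (Finset.mem_univ i)) (sq_nonneg _)

theorem exists_dotProduct_mulVec_eq_sup'_eigenvalues [Nonempty n] :
    ∃ x : n → ℝ, x ⬝ᵥ x = 1 ∧
      x ⬝ᵥ A *ᵥ x = Finset.univ.sup' Finset.univ_nonempty hA.eigenvalues := by
  obtain ⟨i, -, hi⟩ := Finset.exists_mem_eq_sup' Finset.univ_nonempty hA.eigenvalues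
  have hnorm := hA.eigenvectorBasis.dotProduct_self i
  refine ⟨_, hnorm, ?_⟩
  rw [hA.mulVec_eigenvectorBasis, dotProduct_smul, smul_eq_mul, hnorm, mul_one, hi]

end Matrix.IsHermitian

theorem sumNLargest_one_eq_sup' {N : ℕ} [NeZero N] {A : Matrix (Fin N) (Fin N) ℝ}
    (hA : A.IsHermitian) :
    sumNLargest 1 A = Finset.univ.sup' Finset.univ_nonempty hA.eigenvalues := by
  rw [sumNLargest, dif_pos hA]
  generalize hl : (List.ofFn hA.eigenvalues).insertionSort (· ≥ ·) = l
  have hperm : l.Perm (List.ofFn hA.eigenvalues) := hl ▸ List.perm_insertionSort _ _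
  have hsorted : l.Pairwise (· ≥ ·) := hl ▸ List.pairwise_insertionSort _ _
  obtain ⟨hd, tl, rfl⟩ : ∃ hd tl, l = hd :: tl :=
    List.exists_cons_of_ne_nil fun h => NeZero.ne N (by simpa [h] using hperm.length_eq.symm)
  simp only [List.take_succ_cons, List.take_zero, List.sum_singleton]
  apply le_antisymm
  · obtain ⟨i, rfl⟩ := List.mem_ofFn.1 (hperm.subset List.mem_cons_self)
    exact Finset.le_sup' _ (Finset.mem_univ i)
  · refine Finset.sup'_le _ _ fun i _ => ?_
    rcases List.mem_cons.1 (hperm.symm.subset (List.mem_ofFn.2 ⟨i, rfl⟩)) with h | h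
    · exact h.le
    · exact List.rel_of_pairwise_cons hsorted h

theorem ConvexOn.of_forall_le_of_exists_eq {κ E : Type*} [AddCommMonoid E] [Module ℝ E]
    {s : Set E} {f : E → ℝ} {g : κ → E → ℝ} (hs : Convex ℝ s) (hg : ∀ k, ConvexOn ℝ s (g k))
    (hle : ∀ k, ∀ x ∈ s, g k x ≤ f x) (hex : ∀ x ∈ s, ∃ k, g k x = f x) : ConvexOn ℝ s f := by
  refine ⟨hs, fun x hx y hy a b ha hb hab => ?_⟩
  obtain ⟨k, hk⟩ := hex _ (hs hx hy ha hb hab)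
  calc f (a • x + b • y) = g k (a • x + b • y) := hk.symm
    _ ≤ a • g k x + b • g k y := (hg k).2 hx hy ha hb hab
    _ ≤ a • f x + b • f y := by gcongr <;> exact hle k _ ‹_›

theorem convexOn_dotProduct_self {n : Type*} [Fintype n] :
    ConvexOn ℝ Set.univ fun v : n → ℝ => v ⬝ᵥ v := by
  refine ⟨convex_univ, fun u _ v _ a b ha hb hab => ?_⟩
  simp only [dotProduct, Pi.add_apply, Pi.smul_apply, smul_eq_mul, Finset.mul_sum,
    ← Finset.sum_add_distrib]
  refine Finset.sum_le_sum fun i _ => ?_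
  simpa only [sq, smul_eq_mul] using
    (even_two.convexOn_pow (𝕜 := ℝ)).2 (Set.mem_univ (u i)) (Set.mem_univ (v i)) ha hb hab

theorem ConvexOn.comp_of_map_smul_add_smul {E F : Type*} [AddCommMonoid E] [Module ℝ E]
    [AddCommMonoid F] [Module ℝ F] {f : F → ℝ} (hf : ConvexOn ℝ Set.univ f) {φ : E → F}
    (hφ : ∀ x y (a b : ℝ), a + b = 1 → φ (a • x + b • y) = a • φ x + b • φ y) :
    ConvexOn ℝ Set.univ (f ∘ φ) :=
  ⟨convex_univ, fun x _ y _ a b ha hb hab => by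
    simpa only [Function.comp_apply, hφ x y a b hab] using
      hf.2 (Set.mem_univ (φ x)) (Set.mem_univ (φ y)) ha hb hab⟩

theorem Matrix.IsHermitian.mul_self {n : Type*} [Fintype n] {S : Matrix n n ℝ}
    (hS : S.IsHermitian) : (S * S).IsHermitian := by
  simpa only [hS.eq] using isHermitian_mul_conjTranspose_self S

theorem Matrix.IsHermitian.dotProduct_mul_self_mulVec {n : Type*} [Fintype n]
    {S : Matrix n n ℝ} (hS : S.IsHermitian) (x : n → ℝ) :
    x ⬝ᵥ (S * S) *ᵥ x = (S *ᵥ x) ⬝ᵥ (S *ᵥ x) := by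
  have hT : Sᵀ = S := hS
  rw [← mulVec_mulVec, dotProduct_mulVec, ← mulVec_transpose, hT]

section RandomMatrix

variable {n Ω : Type*} [MeasurableSpace Ω] {μ : Measure Ω}
  {M : Ω → Matrix n n ℝ}

theorem integrable_dotProduct_mulVec [Fintype n] (hM : ∀ i j, Integrable (fun ω => M ω i j) μ)
    (x y : n → ℝ) : Integrable (fun ω => x ⬝ᵥ M ω *ᵥ y) μ := by
  simp only [dotProduct, mulVec, Finset.mul_sum]
  exact integrable_finsetSum _ fun i _ => integrable_finsetSum _ fun j _ =>
    ((hM i j).mul_const (y j)).const_mul (x i)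

theorem integral_dotProduct_mulVec [Fintype n] (hM : ∀ i j, Integrable (fun ω => M ω i j) μ)
    (x y : n → ℝ) :
    ∫ ω, x ⬝ᵥ M ω *ᵥ y ∂μ = x ⬝ᵥ (of fun i j => ∫ ω, M ω i j ∂μ) *ᵥ y := by
  simp only [dotProduct, mulVec, of_apply, Finset.mul_sum]
  rw [integral_finsetSum _ fun i _ => integrable_finsetSum _ fun j _ =>
    ((hM i j).mul_const (y j)).const_mul (x i)]
  refine Finset.sum_congr rfl fun i _ => ?_
  rw [integral_finsetSum _ fun j _ => ((hM i j).mul_const (y j)).const_mul (x i)]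
  refine Finset.sum_congr rfl fun j _ => ?_
  rw [integral_const_mul, integral_mul_const]

theorem isHermitian_of_integral (hM : ∀ ω, (M ω).IsHermitian) :
    (of fun i j => ∫ ω, M ω i j ∂μ).IsHermitian := by
  ext i j
  simp only [conjTranspose_apply, of_apply, star_trivial]
  exact integral_congr_ae (ae_of_all _ fun ω => (hM ω).apply i j)

theorem integrable_mul_apply_of_memLp_top [Fintype n] [IsFiniteMeasure μ] {M' : Ω → Matrix n n ℝ}
    (hM : ∀ i j, MemLp (fun ω => M ω i j) ⊤ μ) (hM' : ∀ i j, MemLp (fun ω => M' ω i j) ⊤ μ)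
    (i j : n) : Integrable (fun ω => (M ω * M' ω) i j) μ := by
  simp only [mul_apply]
  exact integrable_finsetSum _ fun k _ => ((hM' k j).mul' (hM i k)).integrable le_top

theorem dotProduct_integral_mul_self_mulVec [Fintype n] (hM : ∀ ω, (M ω).IsHermitian)
    (hMM : ∀ i j, Integrable (fun ω => (M ω * M ω) i j) μ) (x : n → ℝ) :
    x ⬝ᵥ (of fun i j => ∫ ω, (M ω * M ω) i j ∂μ) *ᵥ x = ∫ ω, (M ω *ᵥ x) ⬝ᵥ (M ω *ᵥ x) ∂μ := by
  rw [← integral_dotProduct_mulVec hMM]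
  exact integral_congr_ae (ae_of_all _ fun ω => (hM ω).dotProduct_mul_self_mulVec x)

theorem integrable_mulVec_dotProduct_mulVec [Fintype n] (hM : ∀ ω, (M ω).IsHermitian)
    (hMM : ∀ i j, Integrable (fun ω => (M ω * M ω) i j) μ) (x : n → ℝ) :
    Integrable (fun ω => (M ω *ᵥ x) ⬝ᵥ (M ω *ᵥ x)) μ :=
  (integrable_dotProduct_mulVec hMM x x).congr
    (ae_of_all _ fun ω => (hM ω).dotProduct_mul_self_mulVec x)

end RandomMatrix

section StateMatrix

variable {N : ℕ} {ι : Type*} [Fintype ι] {Ω : Type*} (a b : ι → Fin N) (L : ι → Ω → ℝ)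

theorem stateMatrix_isHermitian (Wt : ι → ℝ) (ω : Ω) : (stateMatrix a b L Wt ω).IsHermitian := by
  refine isHermitian_iff_isSymm.2 (IsSymm.ext fun i j => ?_)
  by_cases h : i = j
  · rw [h]
  · simp only [stateMatrix, of_apply, if_neg h, if_neg (Ne.symm h), or_comm]

theorem stateMatrix_smul_add_smul (W W' : ι → ℝ) (ω : Ω) {s t : ℝ} (hst : s + t = 1) :
    stateMatrix a b L (s • W + t • W') ω
      = s • stateMatrix a b L W ω + t • stateMatrix a b L W' ω := by
  have hsum : ∀ (P : ι → Prop) [DecidablePred P],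
      (∑ η, if P η then (s • W + t • W') η * L η ω else 0)
        = s * (∑ η, if P η then W η * L η ω else 0)
          + t * (∑ η, if P η then W' η * L η ω else 0) := by
    intro P _
    simp only [Finset.mul_sum, ← Finset.sum_add_distrib, Pi.add_apply, Pi.smul_apply, smul_eq_mul]
    refine Finset.sum_congr rfl fun η _ => ?_
    split_ifs <;> ring
  ext i j
  simp only [stateMatrix, of_apply, Matrix.add_apply, Matrix.smul_apply, smul_eq_mul]
  split_ifs
  · rw [hsum]; linear_combination -hst
  · rw [hsum]

theorem memLp_top_stateMatrix_apply [MeasurableSpace Ω] {μ : Measure Ω}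
    (hL : ∀ η, MemLp (L η) ⊤ μ) (Wt : ι → ℝ) (i j : Fin N) :
    MemLp (fun ω => stateMatrix a b L Wt ω i j) ⊤ μ := by
  have hsum : ∀ (P : ι → Prop) [DecidablePred P],
      MemLp (fun ω => ∑ η, if P η then Wt η * L η ω else 0) ⊤ μ := fun P _ =>
    memLp_finsetSum _ fun η _ => by
      split_ifs
      · exact (hL η).const_mul (Wt η)
      · exact MemLp.zero
  simp only [stateMatrix, of_apply]
  split_ifs
  · exact (memLp_top_const 1).sub (hsum _)
  · exact hsum _

theorem convexOn_stateMatrix_mulVec_dotProduct_self (ω : Ω) (x : Fin N → ℝ) :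
    ConvexOn ℝ Set.univ fun W => (stateMatrix a b L W ω *ᵥ x) ⬝ᵥ (stateMatrix a b L W ω *ᵥ x) :=
  convexOn_dotProduct_self.comp_of_map_smul_add_smul fun W W' s t hst => by
    rw [stateMatrix_smul_add_smul a b L W W' ω hst, add_mulVec, smul_mulVec, smul_mulVec]

end StateMatrix

theorem lam1_expected_sq_convex_general (N : ℕ) (hN : 0 < N) {ι : Type*} [Fintype ι]
    {Ω : Type*} [MeasurableSpace Ω] (μ : MeasureTheory.Measure Ω)
    [IsProbabilityMeasure μ]
    (a b : ι → Fin N)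
    (L : ι → Ω → ℝ) (hLmeas : ∀ η, Measurable (L η))
    (hL01 : ∀ η ω, L η ω = 0 ∨ L η ω = 1)
    (J : Matrix (Fin N) (Fin N) ℝ) (hJ : J = Matrix.of fun _ _ => (1 : ℝ) / N) :
    ConvexOn ℝ Set.univ (fun Wt : ι → ℝ =>
      sumNLargest 1 ((Matrix.of fun i j =>
        ∫ ω, (stateMatrix a b L Wt ω * stateMatrix a b L Wt ω) i j ∂μ) - J)) := by
  have : NeZero N := ⟨hN.ne'⟩
  set S := stateMatrix a b L
  set F := fun W => (of fun i j => ∫ ω, (S W ω * S W ω) i j ∂μ) - J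
  have hL : ∀ η, MemLp (L η) ⊤ μ := fun η =>
    memLp_top_of_bound (hLmeas η).aestronglyMeasurable 1
      (ae_of_all _ fun ω => by rcases hL01 η ω with h | h <;> simp [h])
  have hSS : ∀ W i j, Integrable (fun ω => (S W ω * S W ω) i j) μ := fun W =>
    integrable_mul_apply_of_memLp_top (memLp_top_stateMatrix_apply a b L hL W)
      (memLp_top_stateMatrix_apply a b L hL W)
  have hF : ∀ W, (F W).IsHermitian := fun W =>
    (isHermitian_of_integral fun ω => (stateMatrix_isHermitian a b L W ω).mul_self).sub
      (by rw [hJ]; ext; simp)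
  have hform : ∀ x, ConvexOn ℝ Set.univ fun W => x ⬝ᵥ F W *ᵥ x := fun x => by
    have hsq : ConvexOn ℝ Set.univ fun W => ∫ ω, (S W ω *ᵥ x) ⬝ᵥ (S W ω *ᵥ x) ∂μ :=
      integral_convexOn_of_integrand_ae convex_univ
        (ae_of_all _ fun ω => convexOn_stateMatrix_mulVec_dotProduct_self a b L ω x)
        fun W _ => integrable_mulVec_dotProduct_mulVec (stateMatrix_isHermitian a b L W) (hSS W) x
    refine (hsq.sub (concaveOn_const (x ⬝ᵥ J *ᵥ x) convex_univ)).congr fun W _ => ?_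
    rw [Pi.sub_apply, sub_mulVec, dotProduct_sub,
      dotProduct_integral_mul_self_mulVec (stateMatrix_isHermitian a b L W) (hSS W)]
  refine ConvexOn.of_forall_le_of_exists_eq
    (g := fun (x : {x // x ⬝ᵥ x = 1}) W => x.1 ⬝ᵥ F W *ᵥ x.1) convex_univ
    (fun x => hform x) (fun x W _ => ?_) (fun W _ => ?_)
  · rw [sumNLargest_one_eq_sup' (hF W)]
    simpa only [x.2, mul_one] using (hF W).dotProduct_mulVec_le_sup'_eigenvalues_mul x
  · obtain ⟨x, hx, h⟩ := (hF W).exists_dotProduct_mulVec_eq_sup'_eigenvalues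
    exact ⟨⟨x, hx⟩, by rw [sumNLargest_one_eq_sup' (hF W), ← h]⟩

/-- The map from the weight vector `{W_ij : {i,j} ∈ E}` to `λ_1(E[𝒲²] - J)` is convex. -/
theorem lam1_expected_sq_convex (N : ℕ) (hN : 0 < N) {ι : Type*} [Fintype ι]
    {Ω : Type*} [MeasurableSpace Ω] (μ : MeasureTheory.Measure Ω)
    [IsProbabilityMeasure μ]
    (a b : ι → Fin N) (hab : ∀ η, a η ≠ b η)
    (L : ι → Ω → ℝ) (hLmeas : ∀ η, Measurable (L η))
    (hL01 : ∀ η ω, L η ω = 0 ∨ L η ω = 1)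
    (J : Matrix (Fin N) (Fin N) ℝ) (hJ : J = Matrix.of fun _ _ => (1 : ℝ) / N) :
    ConvexOn ℝ Set.univ (fun Wt : ι → ℝ =>
      sumNLargest 1 ((Matrix.of fun i j =>
        ∫ ω, (stateMatrix a b L Wt ω * stateMatrix a b L Wt ω) i j ∂μ) - J)) :=
  lam1_expected_sq_convex_general N hN μ a b L hLmeas hL01 J hJ
end
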